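/- arXiv:2508.00207 — 3 statements merged into one kernel-verified Lean document; each statement's English description precedes it below -/
import Mathlib

section
/- Let N ≥ 1 and let H₁, …, H_{N−1} : ℝ^N → ℝ be twice continuously differentiable. Then the Nambu vector field X : ℝ^N → ℝ^N defined by Xⁱ(x) = {xⁱ, H₁, …, H_{N−1}}(x) is divergence-free: Σᵢ (∂Xⁱ/∂xⁱ)(x) = 0 for all x ∈ ℝ^N (generalized Liouville theorem: the Nambu flow preserves volume). -/
/-- Partial-derivative gradient of `f : ℝ^N → ℝ` at `x`. -/
noncomputable def grad {N : ℕ} (f : (Fin N → ℝ) → ℝ) (x : Fin N → ℝ) : Fin N → ℝ :=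
  fun i => fderiv ℝ f x (Pi.single i 1)

/-- The `i`-th component of the Nambu vector field `{xⁱ, H₁, …, H_{N-1}}`:
the determinant of the Jacobian matrix of `(xⁱ, H₁, …, H_{N-1})`, i.e. the
Levi-Civita contraction
`Σ ε^{i j₁ … j_{N-1}} (∂H₁/∂x^{j₁}) ⋯ (∂H_{N-1}/∂x^{j_{N-1}})`. -/
noncomputable def nambuVF (N : ℕ) (H : Fin (N - 1) → (Fin N → ℝ) → ℝ)
    (i : Fin N) (x : Fin N → ℝ) : ℝ :=
  Matrix.det (Matrix.of fun p q : Fin N =>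
    if _h : (p : ℕ) = 0 then (Pi.single i 1 : Fin N → ℝ) q
    else grad (H ⟨(p : ℕ) - 1, by have := p.isLt; omega⟩) x q)

/-!
Write `Xⁱ(y) = Φ(eᵢ, ∇H₁(y), …, ∇H_{N-1}(y))` with `Φ = det` viewed as an alternating form in the
rows. Differentiating row by row, `∂ᵢXⁱ = Σₚ Φ(eᵢ, …, ∂ᵢ∇Hₚ, …)`, and summing over `i` contracts
the symmetric Hessian of `Hₚ` against two slots of the alternating form `Φ`, which gives zero.
-/

open Function

namespace AlternatingMap

theorem map_update_update_swap {R M N ι : Type*} [Semiring R] [AddCommMonoid M] [Module R M]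
    [AddCommGroup N] [Module R N] [DecidableEq ι] (Φ : M [⋀^ι]→ₗ[R] N) (v : ι → M) {a b : ι}
    (hab : a ≠ b) (x y : M) :
    Φ (update (update v a x) b y) = -Φ (update (update v a y) b x) := by
  rw [← Φ.map_swap _ hab]
  congr 1
  ext i : 1
  rcases eq_or_ne i a with rfl | hia
  · simp [hab]
  rcases eq_or_ne i b with rfl | hib
  · simp [hab]
  · simp [hia, hib, Equiv.swap_apply_of_ne_of_ne]

theorem sum_map_update_single_update_row_eq_zero {R N ι κ : Type*} [CommRing R] [AddCommGroup N]
    [Module R N] [IsAddTorsionFree N] [Fintype κ] [DecidableEq κ] [DecidableEq ι]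
    (Φ : (κ → R) [⋀^ι]→ₗ[R] N) (v : ι → κ → R)
    {a b : ι} (hab : a ≠ b) {A : Matrix κ κ R} (hA : A.IsSymm) :
    ∑ k, Φ (update (update v a (Pi.single k 1)) b (A k)) = 0 := by
  set f : κ → κ → N := fun k l => Φ (update (update v a (Pi.single k 1)) b (Pi.single l 1))
  have hrow : ∀ k, A k = ∑ l, A k l • Pi.single l 1 := fun k => by
    simp_rw [← Pi.single_smul, smul_eq_mul, mul_one, Finset.univ_sum_single]
  have hexpand : ∑ k, Φ (update (update v a (Pi.single k 1)) b (A k)) =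
      ∑ k, ∑ l, A k l • f k l := by
    refine Fintype.sum_congr _ _ fun k => ?_
    conv_lhs => rw [hrow k, Φ.map_update_sum]
    simp only [Φ.map_update_smul, f]
  rw [hexpand, ← self_eq_neg]
  calc ∑ k, ∑ l, A k l • f k l = ∑ k, ∑ l, A l k • -f l k := by
        refine Fintype.sum_congr _ _ fun k => Fintype.sum_congr _ _ fun l => ?_
        rw [hA.apply]
        exact congrArg _ (Φ.map_update_update_swap v hab _ _)
    _ = -∑ k, ∑ l, A k l • f k l := by
        rw [Finset.sum_comm]
        simp only [smul_neg, Finset.sum_neg_distrib]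

end AlternatingMap

theorem ContinuousAlternatingMap.hasFDerivAt_update_const {𝕜 E F G ι : Type*}
    [NontriviallyNormedField 𝕜] [NormedAddCommGroup E] [NormedSpace 𝕜 E] [NormedAddCommGroup F]
    [NormedSpace 𝕜 F] [NormedAddCommGroup G] [NormedSpace 𝕜 G] [Fintype ι] [DecidableEq ι]
    (Φ : E [⋀^ι]→L[𝕜] F) {g : ι → G → E} {g' : ι → G →L[𝕜] E} {x : G} (a : ι) (c : E)
    (hg : ∀ j ≠ a, HasFDerivAt (g j) (g' j) x) :
    HasFDerivAt (fun y => Φ (update (fun j => g j y) a c))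
      (∑ j ∈ Finset.univ.erase a,
        Φ.toContinuousLinearMap (update (fun j => g j x) a c) j ∘L g' j)
      x := by
  have hupd : ∀ j, HasFDerivAt (fun y => update (fun j => g j y) a c j) (update g' a 0 j) x := by
    intro j
    rcases eq_or_ne j a with rfl | hja
    · simpa using hasFDerivAt_const c x
    · simpa [hja] using hg j hja
  have hcomp := HasFDerivAt.multilinear_comp Φ.toContinuousMultilinearMap hupd
  rw [← Finset.sum_erase _ (a := a) (by simp)] at hcomp
  refine hcomp.congr_fderiv (Finset.sum_congr rfl fun j hj => ?_)
  rw [update_of_ne (Finset.ne_of_mem_erase hj)]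
  rfl

noncomputable def hessian {n : ℕ} (f : (Fin n → ℝ) → ℝ) (x : Fin n → ℝ) :
    Matrix (Fin n) (Fin n) ℝ :=
  fun k l => fderiv ℝ (fderiv ℝ f) x (Pi.single k 1) (Pi.single l 1)

theorem hessian_isSymm {n : ℕ} {f : (Fin n → ℝ) → ℝ} {x : Fin n → ℝ} (hf : ContDiffAt ℝ 2 f x) :
    (hessian f x).IsSymm :=
  Matrix.IsSymm.ext fun k l => (hf.isSymmSndFDerivAt (by simp)).eq _ _

theorem hasFDerivAt_grad {n : ℕ} {f : (Fin n → ℝ) → ℝ} {x : Fin n → ℝ}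
    (hf : DifferentiableAt ℝ (fderiv ℝ f) x) :
    HasFDerivAt (grad f) (ContinuousLinearMap.pi fun l =>
      (ContinuousLinearMap.apply ℝ ℝ (Pi.single l 1)).comp (fderiv ℝ (fderiv ℝ f) x)) x :=
  hasFDerivAt_pi.2 fun l =>
    HasFDerivAt.comp (f := fderiv ℝ f) x
      (ContinuousLinearMap.apply ℝ ℝ (Pi.single l 1)).hasFDerivAt hf.hasFDerivAt

theorem ContinuousAlternatingMap.sum_fderiv_map_update_grad_eq_zero {n : ℕ} {ι F : Type*}
    [Fintype ι] [DecidableEq ι] [NormedAddCommGroup F] [NormedSpace ℝ F]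
    (Φ : (Fin n → ℝ) [⋀^ι]→L[ℝ] F)
    (h : ι → (Fin n → ℝ) → ℝ) (a : ι) {x : Fin n → ℝ} (hh : ∀ j ≠ a, ContDiffAt ℝ 2 (h j) x) :
    ∑ k, fderiv ℝ (fun y => Φ (update (fun j => grad (h j) y) a (Pi.single k 1))) x
      (Pi.single k 1) = 0 := by
  have hgrad : ∀ j ≠ a, HasFDerivAt (grad (h j)) _ x := fun j hj =>
    hasFDerivAt_grad (((hh j hj).fderiv_right (m := 1) le_rfl).differentiableAt one_ne_zero)
  simp only [(Φ.hasFDerivAt_update_const a _ hgrad).fderiv, _root_.sum_apply,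
    ContinuousLinearMap.comp_apply, ContinuousAlternatingMap.toContinuousLinearMap_apply]
  have : IsAddTorsionFree F := .of_isTorsionFree ℝ F
  rw [Finset.sum_comm]
  refine Finset.sum_eq_zero fun j hj => ?_
  have hja := Finset.ne_of_mem_erase hj
  -- `∂ₖ(∇hⱼ)` is, definitionally, the `k`-th row of the Hessian of `hⱼ`.
  exact Φ.toAlternatingMap.sum_map_update_single_update_row_eq_zero _ hja.symm
    (hessian_isSymm (hh j hja))

noncomputable def Matrix.detRowContinuousAlternating (n R : Type*) [Fintype n] [DecidableEq n]
    [CommRing R] [TopologicalSpace R] [IsTopologicalRing R] : (n → R) [⋀^n]→L[R] R :=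
  { Matrix.detRowAlternating with cont := continuous_id.matrix_det }

-- Row `0` gets the dummy potential `0`, whose gradient is overwritten by `eᵢ`.
theorem nambuVF_eq_det_update_grad (N : ℕ) (hN : 1 ≤ N) (H : Fin (N - 1) → (Fin N → ℝ) → ℝ)
    (i : Fin N) :
    nambuVF N H i = fun y => Matrix.detRowContinuousAlternating (Fin N) ℝ
      (update (fun p => grad (if hp : (p : ℕ) = 0 then 0 else H ⟨p - 1, by omega⟩) y) ⟨0, hN⟩
        (Pi.single i 1)) := by
  funext y
  change Matrix.det _ = Matrix.det _
  congr 1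
  ext p q
  by_cases hp : (p : ℕ) = 0
  · simp [show p = ⟨0, hN⟩ from Fin.ext hp]
  · simp [hp, show p ≠ ⟨0, hN⟩ from fun h => hp (congrArg Fin.val h)]

/-- generalized Liouville theorem: for twice continuously
differentiable Hamiltonians `H₁, …, H_{N-1}`, the Nambu vector field
`Xⁱ(x) = {xⁱ, H₁, …, H_{N-1}}(x)` is divergence-free:
`Σᵢ ∂Xⁱ/∂xⁱ = 0` everywhere. -/
theorem nambu_vector_field_divergence_free
    (N : ℕ) (hN : 1 ≤ N) (H : Fin (N - 1) → (Fin N → ℝ) → ℝ)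
    (hH : ∀ m, ContDiff ℝ 2 (H m)) (x : Fin N → ℝ) :
    ∑ i : Fin N, fderiv ℝ (fun y => nambuVF N H i y) x (Pi.single i 1) = 0 := by
  simp only [nambuVF_eq_det_update_grad N hN]
  refine ContinuousAlternatingMap.sum_fderiv_map_update_grad_eq_zero _ _ _ fun p hpa => ?_
  have hp : (p : ℕ) ≠ 0 := fun h => hpa (Fin.ext h)
  simpa [hp] using (hH _).contDiffAt
end

section
/- Let N ≥ 1, let H₁, …, H_{N−1}, S : ℝ^N → ℝ be continuously differentiable, let L be a symmetric positive-definite N × N real matrix, and let x : ℝ → ℝ^N be differentiable and satisfy ẋⁱ(t) = {xⁱ, H₁, …, H_{N−1}}(x(t)) + (L ∇S(x(t)))ⁱ for all t and i. Fix m ∈ {1, …, N−1} and a time t₀ with ∇S(x(t₀)) ≠ 0. If there is c > 0 with ∇H_m(x(t₀)) = −c ∇S(x(t₀)) (the gradients point in opposite directions), then d/dt H_m(x(t))|_{t=t₀} < 0; if there is c > 0 with ∇H_m(x(t₀)) = c ∇S(x(t₀)) (the gradients are aligned), then d/dt H_m(x(t))|_{t=t₀} > 0. -/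
open Matrix

/-! The Nambu field is orthogonal to every `∇H_m`: pairing it with a vector `w` gives, by cofactor
expansion along the first row, the determinant of the matrix with rows `w, ∇H₁, …, ∇H_{N-1}`,
which vanishes for `w = ∇H_m`. Hence along a solution `d/dt H_m = ∇H_m ⬝ L ∇S`, and substituting
`∇H_m = ±c ∇S` gives `±c (∇S ⬝ L ∇S)`, whose sign is fixed by positive definiteness of `L`. -/

theorem fderiv_apply_eq_grad_dotProduct {N : ℕ} (f : (Fin N → ℝ) → ℝ) (p v : Fin N → ℝ) :
    fderiv ℝ f p v = grad f p ⬝ᵥ v := by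
  conv_lhs => rw [pi_eq_sum_univ' v]
  simp [map_sum, grad, dotProduct, mul_comm]

theorem deriv_comp_eq_grad_dotProduct {N : ℕ} {f : (Fin N → ℝ) → ℝ}
    {x : ℝ → Fin N → ℝ} {t : ℝ} (hf : DifferentiableAt ℝ f (x t)) (hx : DifferentiableAt ℝ x t) :
    deriv (fun s => f (x s)) t = grad f (x t) ⬝ᵥ deriv x t :=
  (hf.hasFDerivAt.comp_hasDerivAt t hx.hasDerivAt).deriv.trans
    (fderiv_apply_eq_grad_dotProduct f _ _)

noncomputable def nambuMatrix (N : ℕ) (H : Fin (N - 1) → (Fin N → ℝ) → ℝ)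
    (w x : Fin N → ℝ) : Matrix (Fin N) (Fin N) ℝ :=
  of fun p q => if _h : (p : ℕ) = 0 then w q
    else grad (H ⟨(p : ℕ) - 1, by have := p.isLt; omega⟩) x q

theorem nambuVF_eq_det (N : ℕ) (H : Fin (N - 1) → (Fin N → ℝ) → ℝ) (i : Fin N) (x : Fin N → ℝ) :
    nambuVF N H i x = (nambuMatrix N H (Pi.single i 1) x).det := rfl

theorem nambuMatrix_updateRow_zero {N : ℕ} [NeZero N] (H : Fin (N - 1) → (Fin N → ℝ) → ℝ)
    (w w' x : Fin N → ℝ) : (nambuMatrix N H w x).updateRow 0 w' = nambuMatrix N H w' x := by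
  ext p q
  by_cases hp : p = 0
  · subst hp; simp [nambuMatrix]
  · simp [nambuMatrix, hp]

theorem dotProduct_nambuVF {N : ℕ} [NeZero N] (H : Fin (N - 1) → (Fin N → ℝ) → ℝ)
    (w x : Fin N → ℝ) : w ⬝ᵥ (fun i => nambuVF N H i x) = (nambuMatrix N H w x).det := by
  rw [det_eq_sum_mul_adjugate_row _ 0]
  refine Finset.sum_congr rfl fun i _ => ?_
  rw [adjugate_apply, nambuMatrix_updateRow_zero, ← nambuVF_eq_det]
  simp [nambuMatrix]

theorem grad_dotProduct_nambuVF {N : ℕ} (H : Fin (N - 1) → (Fin N → ℝ) → ℝ) (m : Fin (N - 1))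
    (x : Fin N → ℝ) : grad (H m) x ⬝ᵥ (fun i => nambuVF N H i x) = 0 := by
  have hm : (m : ℕ) + 1 < N := by omega
  have : NeZero N := ⟨by omega⟩
  rw [dotProduct_nambuVF]
  refine det_zero_of_row_eq (i := 0) (j := ⟨m + 1, hm⟩) (by simp [Fin.ext_iff]) ?_
  ext q
  simp [nambuMatrix]

theorem deriv_hamiltonian_eq_grad_dotProduct_mulVec_grad {N : ℕ}
    {H : Fin (N - 1) → (Fin N → ℝ) → ℝ} {m : Fin (N - 1)} {S : (Fin N → ℝ) → ℝ}
    {L : Matrix (Fin N) (Fin N) ℝ} {x : ℝ → Fin N → ℝ} {t : ℝ}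
    (hH : DifferentiableAt ℝ (H m) (x t)) (hx : DifferentiableAt ℝ x t)
    (hev : deriv x t = (fun i => nambuVF N H i (x t)) + L *ᵥ grad S (x t)) :
    deriv (fun s => H m (x s)) t = grad (H m) (x t) ⬝ᵥ L *ᵥ grad S (x t) := by
  rw [deriv_comp_eq_grad_dotProduct hH hx, hev, dotProduct_add, grad_dotProduct_nambuVF,
    zero_add]

theorem hamiltonian_monotone_of_aligned_gradients_general
    (N : ℕ) (H : Fin (N - 1) → (Fin N → ℝ) → ℝ)
    (hH : ∀ m, ContDiff ℝ 1 (H m))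
    (S : (Fin N → ℝ) → ℝ)
    (L : Matrix (Fin N) (Fin N) ℝ)
    (hLpos : ∀ v : Fin N → ℝ, v ≠ 0 → 0 < v ⬝ᵥ L.mulVec v)
    (x : ℝ → Fin N → ℝ) (hx : Differentiable ℝ x)
    (hev : ∀ (t : ℝ) (i : Fin N),
      deriv x t i = nambuVF N H i (x t) + L.mulVec (grad S (x t)) i)
    (m : Fin (N - 1)) (t₀ : ℝ) (hgrad : grad S (x t₀) ≠ 0) :
    ((∃ c : ℝ, 0 < c ∧ grad (H m) (x t₀) = -c • grad S (x t₀)) →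
        deriv (fun s => H m (x s)) t₀ < 0) ∧
    ((∃ c : ℝ, 0 < c ∧ grad (H m) (x t₀) = c • grad S (x t₀)) →
        0 < deriv (fun s => H m (x s)) t₀) := by
  have hderiv : deriv (fun s => H m (x s)) t₀ = grad (H m) (x t₀) ⬝ᵥ L *ᵥ grad S (x t₀) :=
    deriv_hamiltonian_eq_grad_dotProduct_mulVec_grad
      ((hH m).differentiable one_ne_zero _) (hx t₀) (funext (hev t₀))
  have hpos : 0 < grad S (x t₀) ⬝ᵥ L *ᵥ grad S (x t₀) := hLpos _ hgrad
  refine ⟨fun ⟨c, hc, hcg⟩ => ?_, fun ⟨c, hc, hcg⟩ => ?_⟩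
  · rw [hderiv, hcg, neg_smul, neg_dotProduct, smul_dotProduct, smul_eq_mul, neg_neg_iff_pos]
    exact mul_pos hc hpos
  · rw [hderiv, hcg, smul_dotProduct, smul_eq_mul]
    exact mul_pos hc hpos

/-- along a solution of the full dynamics with `L` symmetric
positive definite, at a time `t₀` where `∇S(x(t₀)) ≠ 0`:
if `∇H_m(x(t₀)) = −c ∇S(x(t₀))` for some `c > 0` (opposite directions), then
`d/dt H_m(x(t))|_{t₀} < 0`; if `∇H_m(x(t₀)) = c ∇S(x(t₀))` for some `c > 0`
(aligned directions), then `d/dt H_m(x(t))|_{t₀} > 0`. -/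
theorem hamiltonian_monotone_of_aligned_gradients
    (N : ℕ) (hN : 1 ≤ N) (H : Fin (N - 1) → (Fin N → ℝ) → ℝ)
    (hH : ∀ m, ContDiff ℝ 1 (H m))
    (S : (Fin N → ℝ) → ℝ) (hS : ContDiff ℝ 1 S)
    (L : Matrix (Fin N) (Fin N) ℝ)
    (hLsymm : L.IsSymm)
    (hLpos : ∀ v : Fin N → ℝ, v ≠ 0 → 0 < v ⬝ᵥ L.mulVec v)
    (x : ℝ → Fin N → ℝ) (hx : Differentiable ℝ x)
    (hev : ∀ (t : ℝ) (i : Fin N),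
      deriv x t i = nambuVF N H i (x t) + L.mulVec (grad S (x t)) i)
    (m : Fin (N - 1)) (t₀ : ℝ) (hgrad : grad S (x t₀) ≠ 0) :
    ((∃ c : ℝ, 0 < c ∧ grad (H m) (x t₀) = -c • grad S (x t₀)) →
        deriv (fun s => H m (x s)) t₀ < 0) ∧
    ((∃ c : ℝ, 0 < c ∧ grad (H m) (x t₀) = c • grad S (x t₀)) →
        0 < deriv (fun s => H m (x s)) t₀) :=
  hamiltonian_monotone_of_aligned_gradients_general N H hH S L hLpos x hx hev m t₀ hgrad
end

section
/- Let β, k₂₁, k₃₂, k₁₃ ∈ ℝ and define L : ℝ³ → (Fin 3 → Fin 3 → Fin 3 → ℝ), symmetric in its last two indices, with nonzero entries L_{1,11} = ½β²(k₂₁x₁ − k₁₃x₃), L_{2,22} = ½β²(k₃₂x₂ − k₂₁x₁), L_{3,33} = ½β²(k₁₃x₃ − k₃₂x₂), L_{1,22} = −L_{2,11} = ½β²k₂₁x₁, L_{2,33} = −L_{3,22} = ½β²k₃₂x₂, L_{3,11} = −L_{1,33} = ½β²k₁₃x₃, L_{1,12} = L_{1,21} = −L_{2,21} = −L_{2,12}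 = −½β²k₂₁x₁, L_{2,23} = L_{2,32} = −L_{3,32} = −L_{3,23} = −½β²k₃₂x₂, L_{3,31} = L_{3,13} = −L_{1,13} = −L_{1,31} = −½β²k₁₃x₃, and all remaining entries zero. Then for all x ∈ ℝ³: (i) L_{i,i₁i₂} = L_{i₁,i i₂} = L_{i₂,i i₁} for all indices i, i₁, i₂; and (ii) L_{i,jj} = −L_{j,ii} and L_{i,ij} = −L_{j,ji} for all i ≠ j. -/
/-- The second-order transport tensor `L_{i,i₁i₂}` of the triangular reaction
(indices `0,1,2` standing for `1,2,3`), with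
`L_{1,11} = ½β²(k₂₁x₁ − k₁₃x₃)`, `L_{2,22} = ½β²(k₃₂x₂ − k₂₁x₁)`,
`L_{3,33} = ½β²(k₁₃x₃ − k₃₂x₂)`,
`L_{1,22} = −L_{2,11} = ½β²k₂₁x₁`, `L_{2,33} = −L_{3,22} = ½β²k₃₂x₂`,
`L_{3,11} = −L_{1,33} = ½β²k₁₃x₃`,
`L_{1,12} = L_{1,21} = −L_{2,21} = −L_{2,12} = −½β²k₂₁x₁`,
`L_{2,23} = L_{2,32} = −L_{3,32} = −L_{3,23} = −½β²k₃₂x₂`,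
`L_{3,31} = L_{3,13} = −L_{1,13} = −L_{1,31} = −½β²k₁₃x₃`,
and all remaining entries zero; it is symmetric in its last two indices. -/
noncomputable def triL (β k₂₁ k₃₂ k₁₃ : ℝ) (x : Fin 3 → ℝ) : Fin 3 → Fin 3 → Fin 3 → ℝ :=
  let c₁ := β ^ 2 * k₂₁ * x 0 / 2
  let c₂ := β ^ 2 * k₃₂ * x 1 / 2
  let c₃ := β ^ 2 * k₁₃ * x 2 / 2
  ![![![c₁ - c₃, -c₁, c₃], ![-c₁, c₁, 0], ![c₃, 0, -c₃]],
    ![![-c₁, c₁, 0], ![c₁, c₂ - c₁, -c₂], ![0, -c₂, c₂]],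
    ![![c₃, 0, -c₃], ![0, -c₂, c₂], ![-c₃, c₂, c₃ - c₂]]]

/-- the second-order transport tensor of the triangular reaction
satisfies, for every `x`:
(i) the full index symmetry `L_{i,i₁i₂} = L_{i₁,i i₂} = L_{i₂,i i₁}`, and
(ii) the antisymmetry properties `L_{i,jj} = −L_{j,ii}` and
`L_{i,ij} = −L_{j,ji}` for all `i ≠ j`. -/
theorem triangular_second_order_transport_symmetries
    (β k₂₁ k₃₂ k₁₃ : ℝ) (x : Fin 3 → ℝ) :
    (∀ i i₁ i₂ : Fin 3,
        triL β k₂₁ k₃₂ k₁₃ x i i₁ i₂ = triL β k₂₁ k₃₂ k₁₃ x i₁ i i₂ ∧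
        triL β k₂₁ k₃₂ k₁₃ x i i₁ i₂ = triL β k₂₁ k₃₂ k₁₃ x i₂ i i₁) ∧
    (∀ i j : Fin 3, i ≠ j →
        triL β k₂₁ k₃₂ k₁₃ x i j j = -triL β k₂₁ k₃₂ k₁₃ x j i i ∧
        triL β k₂₁ k₃₂ k₁₃ x i i j = -triL β k₂₁ k₃₂ k₁₃ x j j i) := by
  constructor
  · intro i i₁ i₂
    fin_cases i <;> fin_cases i₁ <;> fin_cases i₂ <;> simp [triL]
  · intro i j h
    fin_cases i <;> fin_cases j <;> simp_all [triL]
end
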